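/- arXiv:2605.01978 — 2 statements merged into one kernel-verified Lean document; each statement's English description precedes it below -/
import Mathlib

section
/- Suppose the stage cost ℓ(x,u) = βV(x) + ρ[ΔV(x,u) + λV(x)]₊ with ΔV(x,u) = V(F(x,u)) - V(x), and suppose there exists μ with V(F(x,μ(x))) - V(x) ≤ -αV(x) where α ≥ λ. Then for all x, the discounted cost of μ satisfies J_μ(x) = ∑_k δ^k ℓ(x_k^μ, μ(x_k^μ)) ≤ (β/(1 - δ(1-λ)))·V(x), where x_k^μ is the trajectory under μ starting at x. -/
theorem clf_policy_cost_bound {X U : Type*}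
    (β ρ lam α δ : ℝ) (hβ : 0 < β) (hρ : 0 < ρ)
    (hlam : lam ∈ Set.Ioo (0 : ℝ) 1) (hα : α ∈ Set.Ioo (0 : ℝ) 1)
    (hδ : δ ∈ Set.Ioo (0 : ℝ) 1) (hαlam : lam ≤ α)
    (V : X → ℝ) (hV : ∀ x, 0 ≤ V x)
    (F : X → U → X) (μ : X → U)
    (hclf : ∀ x, V (F x (μ x)) - V x ≤ -α * V x)
    (ℓ : X → U → ℝ)
    (hℓ : ∀ x u, ℓ x u = β * V x + ρ * max (V (F x u) - V x + lam * V x) 0)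
    (x₀ : X) (x : ℕ → X) (hx0 : x 0 = x₀)
    (htraj : ∀ k, x (k + 1) = F (x k) (μ (x k))) :
    ∑' k : ℕ, δ ^ k * ℓ (x k) (μ (x k)) ≤ (β / (1 - δ * (1 - lam))) * V x₀ := by
  obtain ⟨hl0, hl1⟩ := hlam
  obtain ⟨ha0, ha1⟩ := hα
  obtain ⟨hd0, hd1⟩ := hδ
  set r : ℝ := δ * (1 - lam) with hr
  have hr0 : 0 ≤ r := by nlinarith
  have hr1 : r < 1 := by nlinarith
  have hℓeq : ∀ k, ℓ (x k) (μ (x k)) = β * V (x k) := by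
    intro k
    have h1 := hclf (x k)
    have h2 : V (F (x k) (μ (x k))) - V (x k) + lam * V (x k) ≤ 0 := by
      nlinarith [hV (x k)]
    rw [hℓ, max_eq_right h2, mul_zero, add_zero]
  have hdecay : ∀ k, V (x k) ≤ (1 - lam) ^ k * V x₀ := by
    intro k
    induction k with
    | zero => simp [hx0]
    | succ n ih =>
      have h1 := hclf (x n)
      have h2 : V (x (n + 1)) ≤ (1 - lam) * V (x n) := by
        rw [htraj n]; nlinarith [hV (x n)]
      calc V (x (n + 1)) ≤ (1 - lam) * V (x n) := h2
        _ ≤ (1 - lam) * ((1 - lam) ^ n * V x₀) := by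
            apply mul_le_mul_of_nonneg_left ih; linarith
        _ = (1 - lam) ^ (n + 1) * V x₀ := by ring
  have hterm : ∀ k, δ ^ k * ℓ (x k) (μ (x k)) ≤ β * V x₀ * r ^ k := by
    intro k
    rw [hℓeq k, hr, mul_pow]
    have hd : (0:ℝ) ≤ δ ^ k := by positivity
    calc δ ^ k * (β * V (x k)) ≤ δ ^ k * (β * ((1 - lam) ^ k * V x₀)) := by
          apply mul_le_mul_of_nonneg_left _ hd
          exact mul_le_mul_of_nonneg_left (hdecay k) hβ.le
      _ = β * V x₀ * (δ ^ k * (1 - lam) ^ k) := by ring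
  have hterm0 : ∀ k, 0 ≤ δ ^ k * ℓ (x k) (μ (x k)) := by
    intro k
    rw [hℓeq k]
    have := hV (x k)
    positivity
  have hsumr : Summable (fun k : ℕ => β * V x₀ * r ^ k) :=
    (summable_geometric_of_lt_one hr0 hr1).mul_left _
  have hsuml : Summable (fun k : ℕ => δ ^ k * ℓ (x k) (μ (x k))) :=
    Summable.of_nonneg_of_le hterm0 hterm hsumr
  calc ∑' k : ℕ, δ ^ k * ℓ (x k) (μ (x k))
      ≤ ∑' k : ℕ, β * V x₀ * r ^ k := Summable.tsum_le_tsum hterm hsuml hsumr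
    _ = β * V x₀ * (1 - r)⁻¹ := by
        rw [tsum_mul_left, tsum_geometric_of_lt_one hr0 hr1]
    _ = (β / (1 - r)) * V x₀ := by ring
end

section
/- Let ζ₋, ζ₊, c_reg > 0, δ, λ ∈ (0,1) with δ(1-λ) < 1, and suppose J* : X → ℝ satisfies the Bellman equation J*(x) = ℓ(x) + δJ*(F(x)), with ℓ(x) ≥ ζ₋V(x) and J*(x) ≤ ((ζ₊ + c_reg)/(1 - δ(1-λ)))V(x) for all x in a forward invariant set Ω. Then J*(F(x)) ≤ q·J*(x) on Ω, where q = δ⁻¹(1 - (1 - δ(1-λ))ζ₋/(ζ₊ + c_reg)). -/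
/-! The stage cost dominates a fixed fraction of the value: `J ≤ (K / a) V` and `ℓ ≥ ζ₋ V` give
`ℓ ≥ (a ζ₋ / K) J`. Substituting this into the Bellman equation `δ J(F x) = J x - ℓ x` yields the
contraction `J(F x) ≤ δ⁻¹ (1 - a ζ₋ / K) J x`, with `a = 1 - δ(1 - λ)` and `K = ζ₊ + c_reg`. -/

lemma bellman_next_value_le {δ c J J' ℓ : ℝ} (hδ : 0 < δ) (hJ : J = ℓ + δ * J')
    (hℓ : c * J ≤ ℓ) : J' ≤ δ⁻¹ * (1 - c) * J := by
  rw [mul_assoc, le_inv_mul_iff₀ hδ]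
  linarith

lemma stage_cost_ge_fraction_of_value {ζ a K J V ℓ : ℝ} (hζ : 0 ≤ ζ) (ha : 0 < a) (hK : 0 < K)
    (hℓ : ζ * V ≤ ℓ) (hJ : J ≤ K / a * V) : a * ζ / K * J ≤ ℓ := by
  have hV : a / K * J ≤ V := by
    rw [div_mul_eq_mul_div, div_le_iff₀ hK]
    rw [div_mul_eq_mul_div, le_div_iff₀ ha, mul_comm J] at hJ
    linarith
  calc a * ζ / K * J = ζ * (a / K * J) := by ring
    _ ≤ ζ * V := mul_le_mul_of_nonneg_left hV hζ
    _ ≤ ℓ := hℓ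

theorem practical_value_decrease_general {X : Type*}
    (ζm ζp creg δ lam : ℝ) (hζm : 0 < ζm) (hζp : 0 < ζp) (hcreg : 0 < creg)
    (hδ : δ ∈ Set.Ioo (0 : ℝ) 1) (hlam : lam ∈ Set.Ioo (0 : ℝ) 1)
    (V : X → ℝ)
    (J : X → ℝ) (ℓ : X → ℝ) (F : X → X) (Ω : Set X)
    (hBellman : ∀ x ∈ Ω, J x = ℓ x + δ * J (F x))
    (hstage : ∀ x ∈ Ω, ζm * V x ≤ ℓ x)
    (hub : ∀ x ∈ Ω, J x ≤ ((ζp + creg) / (1 - δ * (1 - lam))) * V x) :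
    ∀ x ∈ Ω, J (F x) ≤ δ⁻¹ * (1 - (1 - δ * (1 - lam)) * ζm / (ζp + creg)) * J x := by
  obtain ⟨hδ0, hδ1⟩ := hδ
  obtain ⟨hlam0, hlam1⟩ := hlam
  have hgap : 0 < 1 - δ * (1 - lam) := by nlinarith
  intro x hx
  exact bellman_next_value_le hδ0 (hBellman x hx) <|
    stage_cost_ge_fraction_of_value hζm.le hgap (by positivity) (hstage x hx) (hub x hx)

theorem practical_value_decrease {X : Type*}
    (ζm ζp creg δ lam : ℝ) (hζm : 0 < ζm) (hζp : 0 < ζp) (hcreg : 0 < creg)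
    (hδ : δ ∈ Set.Ioo (0 : ℝ) 1) (hlam : lam ∈ Set.Ioo (0 : ℝ) 1)
    (V : X → ℝ) (hV : ∀ x, 0 ≤ V x)
    (J : X → ℝ) (ℓ : X → ℝ) (F : X → X) (Ω : Set X)
    (hinv : ∀ x ∈ Ω, F x ∈ Ω)
    (hBellman : ∀ x ∈ Ω, J x = ℓ x + δ * J (F x))
    (hstage : ∀ x ∈ Ω, ζm * V x ≤ ℓ x)
    (hub : ∀ x ∈ Ω, J x ≤ ((ζp + creg) / (1 - δ * (1 - lam))) * V x) :
    ∀ x ∈ Ω, J (F x) ≤ δ⁻¹ * (1 - (1 - δ * (1 - lam)) * ζm / (ζp + creg)) * J x :=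
  practical_value_decrease_general ζm ζp creg δ lam hζm hζp hcreg hδ hlam V J ℓ F Ω hBellman hstage
    hub
end
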